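/- arXiv:1408.6476 — 7 statements merged into one kernel-verified Lean document; each statement's English description precedes it below -/
import Mathlib

section
/- Let T : M_n(ℂ) → M_n(ℂ) be a unital completely positive trace-preserving Schur multiplier (i.e., T fixes every diagonal matrix, and T(e_{ij}) is a scalar multiple of e_{ij} for all matrix units). If T(x) = ∑_{i=1}^d a_i* x a_i for all x, where a_1, …, a_d ∈ M_n(ℂ), then each a_i is a diagonal matrix. -/
open Matrix BigOperators

noncomputable section

abbrev Mat (I : Type*) [Fintype I] [DecidableEq I] := Matrix I I ℂ

/-- A linear map on a matrix algebra is completely positive iff it admits a Kraus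
representation `x ↦ ∑ i, (a i)ᴴ * x * (a i)`. -/
def IsCP {I : Type*} [Fintype I] [DecidableEq I] (T : Mat I →ₗ[ℂ] Mat I) : Prop :=
  ∃ (d : ℕ) (a : Fin d → Mat I), ∀ x, T x = ∑ i, (a i)ᴴ * x * a i

/-- Unital, completely positive, trace preserving. -/
def IsUCPT {I : Type*} [Fintype I] [DecidableEq I] (T : Mat I →ₗ[ℂ] Mat I) : Prop :=
  T 1 = 1 ∧ (∀ x, (T x).trace = x.trace) ∧ IsCP T

/-- `T` is a convex combination of inner automorphisms `x ↦ u* x u`. -/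
def ConvAut {I : Type*} [Fintype I] [DecidableEq I] (T : Mat I →ₗ[ℂ] Mat I) : Prop :=
  ∃ (d : ℕ) (c : Fin d → ℝ) (u : Fin d → Mat I),
    (∀ i, 0 ≤ c i) ∧ (∑ i, c i = 1) ∧ (∀ i, u i ∈ Matrix.unitaryGroup I ℂ) ∧
    ∀ x, T x = ∑ i, (c i : ℂ) • ((u i)ᴴ * x * u i)

/-- The tensor product `T ⊗ S` of linear maps on matrix algebras, acting on
`M_I ⊗ M_K ≅ M_{I×K}` (with the Kronecker identification). -/
def tensorMap {I K : Type*} [Fintype I] [DecidableEq I] [Fintype K] [DecidableEq K]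
    (T : Mat I →ₗ[ℂ] Mat I) (S : Mat K →ₗ[ℂ] Mat K) :
    Mat (I × K) →ₗ[ℂ] Mat (I × K) where
  toFun M := ∑ p, ∑ q, ∑ v, ∑ w, M (p, v) (q, w) •
      ((T (Matrix.single p q 1)).kronecker (S (Matrix.single v w 1)))
  map_add' M N := by
    simp [Matrix.add_apply, add_smul, Finset.sum_add_distrib]
  map_smul' c M := by
    simp [Matrix.smul_apply, smul_smul, Finset.smul_sum]

/-- Operator norm of a matrix acting on `ℓ²`. -/
def opNorm {I : Type*} [Fintype I] [DecidableEq I] (M : Mat I) : ℝ :=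
  ‖Matrix.toEuclideanCLM (𝕜 := ℂ) M‖

/-- Norm of a linear map between matrix algebras (w.r.t. operator norms). -/
def mapNorm {I J : Type*} [Fintype I] [DecidableEq I] [Fintype J] [DecidableEq J]
    (T : Mat I →ₗ[ℂ] Mat J) : ℝ :=
  sSup { r : ℝ | ∃ M, opNorm M ≤ 1 ∧ r = opNorm (T M) }

/-- The completely bounded norm: `sup_k ‖T ⊗ id_k‖`. -/
def cbNorm {I : Type*} [Fintype I] [DecidableEq I] (T : Mat I →ₗ[ℂ] Mat I) : ℝ :=
  ⨆ k : ℕ, mapNorm (tensorMap T (LinearMap.id (R := ℂ) (M := Mat (Fin (k + 1)))))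

/-- cb-distance from `T` to a set of maps `P`. -/
def cbDist {I : Type*} [Fintype I] [DecidableEq I] (T : Mat I →ₗ[ℂ] Mat I)
    (P : (Mat I →ₗ[ℂ] Mat I) → Prop) : ℝ :=
  sInf { r : ℝ | ∃ V, P V ∧ r = cbNorm (T - V) }

/-- Partial trace `id_I ⊗ τ_K` with `τ_K` the normalized trace. -/
def ptrace {I K : Type*} [Fintype I] [DecidableEq I] [Fintype K] [DecidableEq K]
    (M : Mat (I × K)) : Mat I :=
  Matrix.of fun i j => (Fintype.card K : ℂ)⁻¹ * ∑ s, M (i, s) (j, s)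

end

/-!
Apply the Kraus form to the diagonal projection `e_rr`, which `T` fixes. For `s ≠ r` the
`(s, s)` entry of `∑ j, (a j)ᴴ e_rr (a j)` is `∑ j, |a j r s|²`, while that of `e_rr` is `0`;
a vanishing sum of squares forces every `a j r s = 0`.
-/

section

open scoped ComplexOrder

variable {m ι 𝕜 : Type*} [Fintype m] [DecidableEq m] [Fintype ι] [RCLike 𝕜]

theorem Matrix.conjTranspose_mul_single_mul_apply (a : Matrix m m 𝕜) (r s : m) :
    (aᴴ * single r r (1 : 𝕜) * a) s s = star (a r s) * a r s := by
  simp [Matrix.mul_apply, Matrix.single_apply, ite_and]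

theorem Matrix.isDiag_of_sum_conjTranspose_mul_single_mul
    (a : ι → Matrix m m 𝕜) (h : ∀ r, ∑ j, (a j)ᴴ * single r r 1 * a j = single r r 1)
    (i : ι) : (a i).IsDiag := by
  intro r s hrs
  have hsum : ∑ j, star (a j r s) * a j r s = 0 := by
    simpa only [Matrix.sum_apply, conjTranspose_mul_single_mul_apply,
      single_apply_of_ne _ _ _ _ _ (fun hrs' => hrs hrs'.2)] using congrFun (congrFun (h r) s) s
  rw [Finset.sum_eq_zero_iff_of_nonneg (fun j _ => star_mul_self_nonneg _)] at hsum
  exact (CStarRing.star_mul_self_eq_zero_iff _).mp (hsum i (Finset.mem_univ i))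

end

theorem schur_multiplier_kraus_diagonal_general {n d : ℕ}
    (T : Mat (Fin n) →ₗ[ℂ] Mat (Fin n))
    (hdiag : ∀ x : Mat (Fin n), x.IsDiag → T x = x)
    (a : Fin d → Mat (Fin n))
    (hK : ∀ x, T x = ∑ i, (a i)ᴴ * x * a i) :
    ∀ i, (a i).IsDiag := by
  refine isDiag_of_sum_conjTranspose_mul_single_mul a fun r => ?_
  rw [← hK, hdiag]
  exact diagonal_single r (1 : ℂ) ▸ isDiag_diagonal _

/-- If a UCPT Schur multiplier `T` on `M_n(ℂ)` has a Kraus representation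
`T x = ∑ i, (a i)ᴴ * x * (a i)`, then each `a i` is a diagonal matrix. -/
theorem schur_multiplier_kraus_diagonal {n d : ℕ}
    (T : Mat (Fin n) →ₗ[ℂ] Mat (Fin n))
    (hunital : T 1 = 1) (htrace : ∀ x, (T x).trace = x.trace) (hcp : IsCP T)
    (hdiag : ∀ x : Mat (Fin n), x.IsDiag → T x = x)
    (hschur : ∀ i j : Fin n, ∃ c : ℂ,
      T (Matrix.single i j 1) = c • Matrix.single i j 1)
    (a : Fin d → Mat (Fin n))
    (hK : ∀ x, T x = ∑ i, (a i)ᴴ * x * a i) :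
    ∀ i, (a i).IsDiag :=
  schur_multiplier_kraus_diagonal_general T hdiag a hK
end

section
/- For every integer k, l ≥ 1 and every UCPT map T on M_n(ℂ), the quantity δ_k = min over UCPT maps T' admitting an exact factorization through M_n(ℂ) ⊗ M_k(ℂ) of ‖T − T'‖_cb satisfies δ_{k+l} ≤ (k/(k+l)) δ_k + (l/(k+l)) δ_l. Consequently, if inf_k δ_k = 0 then lim_{k→∞} δ_k = 0. -/
open Matrix BigOperators

/-- `T` has an exact factorization through `M_n(ℂ) ⊗ M_k(ℂ)`: there is a unitary
`u ∈ M_n ⊗ M_k` with `T x = (id_n ⊗ τ_k)(uᴴ (x ⊗ 1_k) u)`. -/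
def HasExactFact {n : ℕ} (k : ℕ) (T : Mat (Fin n) →ₗ[ℂ] Mat (Fin n)) : Prop :=
  ∃ u ∈ Matrix.unitaryGroup (Fin n × Fin k) ℂ,
    ∀ x : Mat (Fin n), T x = ptrace (uᴴ * (x.kronecker (1 : Mat (Fin k))) * u)

/-!
The cb-norm is a genuine (finite) seminorm: `(T ⊗ id_k)(M) = ∑ T(e_pq) ⊗ M_pq` over the blocks
`M_pq` of `M`, so `‖T ⊗ id_k‖ ≤ ∑ ‖T(e_pq)‖` uniformly in `k`. Gluing unitaries block-diagonally,
`(k/(k+l)) T₁ + (l/(k+l)) T₂` factors exactly through `M_n ⊗ M_{k+l}` whenever `T₁` and `T₂` factor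
through `M_n ⊗ M_k` and `M_n ⊗ M_l`; it is again UCPT, and its cb-distance to `T` is at most the
same convex combination of those of `T₁` and `T₂`. Passing to infima gives the inequality, which
says that `k ↦ k δ_k` is subadditive, so `δ_k` converges to `inf_k δ_k` by Fekete's lemma.
-/

namespace Matrix
open scoped Matrix.Norms.L2Operator Kronecker

variable {𝕜 : Type*} [RCLike 𝕜] {l m n o : Type*} [Fintype l] [Fintype m] [Fintype n]
  [Fintype o] [DecidableEq l] [DecidableEq m] [DecidableEq n] [DecidableEq o]

lemma l2_opNorm_one_le : ‖(1 : Matrix n n 𝕜)‖ ≤ 1 := by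
  rw [← diagonal_one, l2_opNorm_diagonal]
  exact pi_norm_le_iff_of_nonneg zero_le_one |>.mpr fun _ => norm_one.le

lemma l2_opNorm_one_submatrix_le {g : o → n} (hg : Function.Injective g) :
    ‖(1 : Matrix n n 𝕜).submatrix id g‖ ≤ 1 := by
  have h := l2_opNorm_conjTranspose_mul_self ((1 : Matrix n n 𝕜).submatrix id g)
  rw [conjTranspose_submatrix, conjTranspose_one, ← submatrix_mul _ _ _ _ _ Function.bijective_id,
    one_mul, submatrix_one _ hg] at h
  nlinarith [l2_opNorm_one_le (𝕜 := 𝕜) (n := o), norm_nonneg ((1 : Matrix n n 𝕜).submatrix id g)]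

lemma l2_opNorm_submatrix_le (M : Matrix m n 𝕜) {f : l → m} {g : o → n}
    (hf : Function.Injective f) (hg : Function.Injective g) : ‖M.submatrix f g‖ ≤ ‖M‖ := by
  set P := (1 : Matrix m m 𝕜).submatrix id f
  set Q := (1 : Matrix n n 𝕜).submatrix id g
  have hM : M.submatrix f g = Pᴴ * M * Q := by
    ext i j
    simp [P, Q, mul_apply, one_apply]
  calc ‖M.submatrix f g‖ ≤ ‖Pᴴ‖ * ‖M‖ * ‖Q‖ := by
        rw [hM]
        exact (l2_opNorm_mul _ _).trans (by gcongr; exact l2_opNorm_mul _ _)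
    _ ≤ 1 * ‖M‖ * 1 := by
        rw [l2_opNorm_conjTranspose]
        gcongr
        exacts [l2_opNorm_one_submatrix_le hf, l2_opNorm_one_submatrix_le hg]
    _ = ‖M‖ := by ring

variable (m n) in
def kroneckerOneRight : Matrix m m ℂ →⋆ₙₐ[ℂ] Matrix (m × n) (m × n) ℂ where
  toFun A := A ⊗ₖ 1
  map_smul' c A := smul_kronecker c A 1
  map_zero' := zero_kronecker 1
  map_add' A B := add_kronecker A B 1
  map_mul' A B := by simp [← mul_kronecker_mul]
  map_star' A := by simp [star_eq_conjTranspose, conjTranspose_kronecker]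

variable (m n) in
def kroneckerOneLeft : Matrix n n ℂ →⋆ₙₐ[ℂ] Matrix (m × n) (m × n) ℂ where
  toFun B := 1 ⊗ₖ B
  map_smul' c B := kronecker_smul c 1 B
  map_zero' := kronecker_zero 1
  map_add' A B := kronecker_add 1 A B
  map_mul' A B := by simp [← mul_kronecker_mul]
  map_star' A := by simp [star_eq_conjTranspose, conjTranspose_kronecker]

lemma l2_opNorm_kronecker_le (A : Matrix m m ℂ) (B : Matrix n n ℂ) : ‖A ⊗ₖ B‖ ≤ ‖A‖ * ‖B‖ := by
  have h : A ⊗ₖ B = kroneckerOneRight m n A * kroneckerOneLeft m n B := by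
    simp [kroneckerOneRight, kroneckerOneLeft, ← mul_kronecker_mul]
  rw [h]
  exact (norm_mul_le _ _).trans <| mul_le_mul (NonUnitalStarAlgHom.norm_apply_le _ _)
    (NonUnitalStarAlgHom.norm_apply_le _ _) (norm_nonneg _) (norm_nonneg _)

end Matrix

section CompletelyBoundedNorm
open scoped Matrix.Norms.L2Operator Kronecker

variable {I J K : Type*} [Fintype I] [DecidableEq I] [Fintype J] [DecidableEq J]
  [Fintype K] [DecidableEq K]

lemma opNorm_eq_norm (M : Mat I) : opNorm M = ‖M‖ := rfl

lemma mapNorm_bddAbove (T : Mat I →ₗ[ℂ] Mat J) :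
    BddAbove {r : ℝ | ∃ M, opNorm M ≤ 1 ∧ r = opNorm (T M)} := by
  refine ⟨‖LinearMap.toContinuousLinearMap T‖, ?_⟩
  rintro _ ⟨M, hM, rfl⟩
  exact (LinearMap.toContinuousLinearMap T).le_of_opNorm_le_of_le le_rfl hM |>.trans_eq (mul_one _)

lemma le_mapNorm (T : Mat I →ₗ[ℂ] Mat J) {M : Mat I} (hM : opNorm M ≤ 1) :
    opNorm (T M) ≤ mapNorm T :=
  le_csSup (mapNorm_bddAbove T) ⟨M, hM, rfl⟩

lemma mapNorm_le (T : Mat I →ₗ[ℂ] Mat J) {c : ℝ} (hc : 0 ≤ c)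
    (h : ∀ M, opNorm M ≤ 1 → opNorm (T M) ≤ c) : mapNorm T ≤ c := by
  refine Real.sSup_le ?_ hc
  rintro _ ⟨M, hM, rfl⟩
  exact h M hM

lemma mapNorm_nonneg (T : Mat I →ₗ[ℂ] Mat J) : 0 ≤ mapNorm T := by
  refine Real.sSup_nonneg ?_
  rintro _ ⟨M, -, rfl⟩
  exact norm_nonneg _

lemma mapNorm_add_le (T S : Mat I →ₗ[ℂ] Mat J) : mapNorm (T + S) ≤ mapNorm T + mapNorm S :=
  mapNorm_le _ (add_nonneg (mapNorm_nonneg T) (mapNorm_nonneg S)) fun M hM =>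
    show ‖T M + S M‖ ≤ _ from
      (norm_add_le _ _).trans (add_le_add (le_mapNorm T hM) (le_mapNorm S hM))

lemma mapNorm_smul_le (c : ℂ) (T : Mat I →ₗ[ℂ] Mat J) : mapNorm (c • T) ≤ ‖c‖ * mapNorm T :=
  mapNorm_le _ (mul_nonneg (norm_nonneg c) (mapNorm_nonneg T)) fun M hM =>
    show ‖c • T M‖ ≤ _ from
      (norm_smul_le _ _).trans (mul_le_mul_of_nonneg_left (le_mapNorm T hM) (norm_nonneg c))

lemma tensorMap_add_left (T₁ T₂ : Mat I →ₗ[ℂ] Mat I) (S : Mat K →ₗ[ℂ] Mat K) :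
    tensorMap (T₁ + T₂) S = tensorMap T₁ S + tensorMap T₂ S := by
  ext1 M
  simp [tensorMap, add_kronecker, Finset.sum_add_distrib]

lemma tensorMap_smul_left (c : ℂ) (T : Mat I →ₗ[ℂ] Mat I) (S : Mat K →ₗ[ℂ] Mat K) :
    tensorMap (c • T) S = c • tensorMap T S := by
  ext1 M
  simp [tensorMap, smul_kronecker, Finset.smul_sum, smul_comm c]

lemma tensorMap_id_apply (T : Mat I →ₗ[ℂ] Mat I) (M : Mat (I × K)) :
    tensorMap T LinearMap.id M =
      ∑ p, ∑ q, T (single p q 1) ⊗ₖ M.submatrix (p, ·) (q, ·) := by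
  ext ⟨i, v⟩ ⟨j, w⟩
  simp [tensorMap, Matrix.sum_apply, single_apply, ite_and, Finset.sum_ite_eq', mul_comm]

lemma mapNorm_tensorMap_id_le (T : Mat I →ₗ[ℂ] Mat I) :
    mapNorm (tensorMap T (LinearMap.id : Mat K →ₗ[ℂ] Mat K)) ≤ ∑ p, ∑ q, ‖T (single p q 1)‖ := by
  refine mapNorm_le _ (by positivity) fun M hM => ?_
  rw [opNorm_eq_norm, tensorMap_id_apply]
  refine (norm_sum_le _ _).trans <| Finset.sum_le_sum fun p _ =>
    (norm_sum_le _ _).trans <| Finset.sum_le_sum fun q _ => ?_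
  calc ‖T (single p q 1) ⊗ₖ M.submatrix (p, ·) (q, ·)‖
      ≤ ‖T (single p q 1)‖ * ‖M.submatrix (p, ·) (q, ·)‖ := l2_opNorm_kronecker_le _ _
    _ ≤ ‖T (single p q 1)‖ * 1 := by
        gcongr
        exact (l2_opNorm_submatrix_le M (Prod.mk_right_injective p)
          (Prod.mk_right_injective q)).trans hM
    _ = ‖T (single p q 1)‖ := mul_one _

lemma cbNorm_bddAbove (T : Mat I →ₗ[ℂ] Mat I) :
    BddAbove (Set.range fun k : ℕ =>
      mapNorm (tensorMap T (LinearMap.id (R := ℂ) (M := Mat (Fin (k + 1)))))) :=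
  ⟨_, Set.forall_mem_range.mpr fun _ => mapNorm_tensorMap_id_le T⟩

lemma cbNorm_nonneg (T : Mat I →ₗ[ℂ] Mat I) : 0 ≤ cbNorm T :=
  Real.iSup_nonneg fun _ => mapNorm_nonneg _

lemma cbNorm_add_le (T S : Mat I →ₗ[ℂ] Mat I) : cbNorm (T + S) ≤ cbNorm T + cbNorm S :=
  Real.iSup_le (fun k => by
    rw [tensorMap_add_left]
    exact (mapNorm_add_le _ _).trans
      (add_le_add (le_ciSup (cbNorm_bddAbove T) k) (le_ciSup (cbNorm_bddAbove S) k)))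
    (add_nonneg (cbNorm_nonneg T) (cbNorm_nonneg S))

lemma cbNorm_smul_le (c : ℂ) (T : Mat I →ₗ[ℂ] Mat I) : cbNorm (c • T) ≤ ‖c‖ * cbNorm T :=
  Real.iSup_le (fun k => by
    rw [tensorMap_smul_left]
    exact (mapNorm_smul_le _ _).trans
      (mul_le_mul_of_nonneg_left (le_ciSup (cbNorm_bddAbove T) k) (norm_nonneg c)))
    (mul_nonneg (norm_nonneg c) (cbNorm_nonneg T))

end CompletelyBoundedNorm

section ExactFactorization
open scoped Kronecker

variable {I K : Type*} [Fintype I] [DecidableEq I] [Fintype K] [DecidableEq K]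

lemma IsCP.add {T S : Mat I →ₗ[ℂ] Mat I} (hT : IsCP T) (hS : IsCP S) : IsCP (T + S) := by
  obtain ⟨d, a, ha⟩ := hT
  obtain ⟨e, b, hb⟩ := hS
  refine ⟨d + e, Fin.append a b, fun x => ?_⟩
  simp [Fin.sum_univ_add, ha, hb]

lemma IsCP.ofReal_smul {T : Mat I →ₗ[ℂ] Mat I} (hT : IsCP T) {c : ℝ} (hc : 0 ≤ c) :
    IsCP ((c : ℂ) • T) := by
  obtain ⟨d, a, ha⟩ := hT
  refine ⟨d, fun i => (Real.sqrt c : ℂ) • a i, fun x => ?_⟩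
  simp [ha, Finset.smul_sum, smul_smul, Real.mul_self_sqrt hc]

lemma IsUCPT.convex_comb {T₁ T₂ : Mat I →ₗ[ℂ] Mat I} (h₁ : IsUCPT T₁) (h₂ : IsUCPT T₂)
    {a b : ℝ} (ha : 0 ≤ a) (hb : 0 ≤ b) (hab : a + b = 1) :
    IsUCPT ((a : ℂ) • T₁ + (b : ℂ) • T₂) := by
  have habC : (a : ℂ) + b = 1 := by exact_mod_cast hab
  refine ⟨?_, fun x => ?_, (h₁.2.2.ofReal_smul ha).add (h₂.2.2.ofReal_smul hb)⟩
  · simp [h₁.1, h₂.1, ← add_smul, hab]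
  · simp [h₁.2.1, h₂.2.1, ← add_mul, habC]

lemma isUCPT_id : IsUCPT (LinearMap.id : Mat I →ₗ[ℂ] Mat I) :=
  ⟨rfl, fun _ => rfl, 1, fun _ => 1, fun x => by simp⟩

lemma sum_diag_eq_card_mul_ptrace (M : Mat (I × K)) (i j : I) :
    ∑ s, M (i, s) (j, s) = Fintype.card K * ptrace M i j := by
  rcases eq_or_ne (Fintype.card K) 0 with hK | hK
  · simp [Fintype.card_eq_zero_iff.mp hK]
  · simp [ptrace, ← mul_assoc, mul_inv_cancel₀ ((Nat.cast_ne_zero (R := ℂ)).mpr hK)]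

variable {n k l : ℕ}

lemma hasExactFact_id (hk : k ≠ 0) :
    HasExactFact k (LinearMap.id : Mat (Fin n) →ₗ[ℂ] Mat (Fin n)) := by
  refine ⟨1, one_mem _, fun x => ?_⟩
  ext i j
  simp [ptrace, one_apply, ← mul_assoc, inv_mul_cancel₀ ((Nat.cast_ne_zero (R := ℂ)).mpr hk)]

variable (n k l) in
def prodFinAddEquiv : Fin n × Fin (k + l) ≃ (Fin n × Fin k) ⊕ (Fin n × Fin l) :=
  (Equiv.prodCongr (Equiv.refl (Fin n)) finSumFinEquiv.symm).trans
    (Equiv.prodSumDistrib (Fin n) (Fin k) (Fin l))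

lemma kronecker_one_submatrix_prodFinAddEquiv (x : Mat (Fin n)) :
    (x.kronecker (1 : Mat (Fin (k + l)))).submatrix (prodFinAddEquiv n k l).symm
      (prodFinAddEquiv n k l).symm = fromBlocks (x.kronecker 1) 0 0 (x.kronecker 1) := by
  ext (⟨i, s⟩ | ⟨i, s⟩) (⟨j, t⟩ | ⟨j, t⟩) <;>
    simp [kronecker, prodFinAddEquiv, one_apply, Fin.ext_iff] <;> omega

lemma HasExactFact.add {T₁ T₂ : Mat (Fin n) →ₗ[ℂ] Mat (Fin n)} (h₁ : HasExactFact k T₁)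
    (h₂ : HasExactFact l T₂) :
    HasExactFact (k + l)
      ((((k : ℝ) / (k + l) : ℝ) : ℂ) • T₁ + (((l : ℝ) / (k + l) : ℝ) : ℂ) • T₂) := by
  obtain ⟨u₁, hu₁, hT₁⟩ := h₁
  obtain ⟨u₂, hu₂, hT₂⟩ := h₂
  set e := prodFinAddEquiv n k l
  set u := (fromBlocks u₁ 0 0 u₂).submatrix e e
  have hconj (x : Mat (Fin n)) : uᴴ * x.kronecker 1 * u = (fromBlocks
      (u₁ᴴ * x.kronecker 1 * u₁) 0 0 (u₂ᴴ * x.kronecker 1 * u₂)).submatrix e e := by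
    rw [← submatrix_id_id (x.kronecker 1), ← e.symm_comp_self, ← submatrix_submatrix,
      kronecker_one_submatrix_prodFinAddEquiv, conjTranspose_submatrix, submatrix_mul_equiv,
      submatrix_mul_equiv, fromBlocks_conjTranspose, fromBlocks_multiply, fromBlocks_multiply]
    simp
  refine ⟨u, ?_, fun x => ?_⟩
  · rw [mem_unitaryGroup_iff, star_eq_conjTranspose, conjTranspose_submatrix, submatrix_mul_equiv,
      fromBlocks_conjTranspose, fromBlocks_multiply]
    simp [← star_eq_conjTranspose, mem_unitaryGroup_iff.mp hu₁, mem_unitaryGroup_iff.mp hu₂]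
  · ext i j
    rw [hconj, ptrace, of_apply]
    simp only [Fintype.card_fin, Fin.sum_univ_add, submatrix_apply, e,
      prodFinAddEquiv, Equiv.trans_apply, Equiv.prodCongr_apply, Prod.map_apply, Equiv.refl_apply,
      finSumFinEquiv_symm_apply_castAdd, finSumFinEquiv_symm_apply_natAdd,
      Equiv.prodSumDistrib_apply_left, Equiv.prodSumDistrib_apply_right, fromBlocks_apply₁₁,
      fromBlocks_apply₂₂, sum_diag_eq_card_mul_ptrace, ← hT₁, ← hT₂, LinearMap.add_apply,
      LinearMap.smul_apply, Matrix.add_apply, Matrix.smul_apply, smul_eq_mul]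
    push_cast
    ring

end ExactFactorization

open Filter Topology in
lemma tendsto_iInf_of_weighted_subadditive (δ : ℕ → ℝ)
    (hbdd : BddBelow (Set.range fun k => δ (k + 1)))
    (h : ∀ k l : ℕ, 1 ≤ k → 1 ≤ l →
      δ (k + l) ≤ ((k : ℝ) / (k + l)) * δ k + ((l : ℝ) / (k + l)) * δ l) :
    Tendsto δ atTop (𝓝 (⨅ k, δ (k + 1))) := by
  have hu : Subadditive fun k => k * δ k := by
    intro k l
    rcases Nat.eq_zero_or_pos k with rfl | hk
    · simp
    rcases Nat.eq_zero_or_pos l with rfl | hl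
    · simp
    have hkl : (0 : ℝ) < k + l := by positivity
    calc ((k + l : ℕ) : ℝ) * δ (k + l)
        ≤ (k + l) * (((k : ℝ) / (k + l)) * δ k + ((l : ℝ) / (k + l)) * δ l) := by
          push_cast
          gcongr
          exact h k l hk hl
      _ = k * δ k + l * δ l := by field_simp
  have hδ : (fun n : ℕ => n * δ n / n) =ᶠ[atTop] δ :=
    eventually_atTop.mpr ⟨1, fun n hn => mul_div_cancel_left₀ _ (by positivity)⟩
  have hbdd' : BddBelow (Set.range fun n : ℕ => n * δ n / n) := by
    obtain ⟨b, hb⟩ := hbdd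
    refine ⟨min b 0, Set.forall_mem_range.mpr fun n => ?_⟩
    rcases n with _ | n
    · simp
    · rw [mul_div_cancel_left₀ _ (by positivity)]
      exact (min_le_left _ _).trans (hb ⟨n, rfl⟩)
  have hlim : hu.lim = ⨅ k, δ (k + 1) := by
    rw [Subadditive.lim, iInf]
    congr 1
    ext r
    constructor
    · rintro ⟨n, hn, rfl⟩
      obtain ⟨k, rfl⟩ := Nat.exists_eq_add_of_le' hn
      exact ⟨k, (mul_div_cancel_left₀ _ (by positivity)).symm⟩
    · rintro ⟨k, rfl⟩
      exact ⟨k + 1, Nat.le_add_left 1 k, mul_div_cancel_left₀ _ (by positivity)⟩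
  exact hlim ▸ (hu.tendsto_lim hbdd').congr' hδ

lemma sInf_le_mul_sInf_add_mul_sInf {s t u : Set ℝ} {a b : ℝ} (ha : 0 ≤ a) (hb : 0 ≤ b)
    (hs : s.Nonempty) (hs' : BddBelow s) (ht : t.Nonempty) (ht' : BddBelow t) (hu : BddBelow u)
    (h : ∀ x ∈ s, ∀ y ∈ t, ∃ z ∈ u, z ≤ a * x + b * y) :
    sInf u ≤ a * sInf s + b * sInf t := by
  rw [← smul_eq_mul, ← smul_eq_mul, ← Real.sInf_smul_of_nonneg ha, ← Real.sInf_smul_of_nonneg hb,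
    ← csInf_add hs.smul_set (hs'.smul_of_nonneg ha) ht.smul_set (ht'.smul_of_nonneg hb)]
  refine le_csInf (hs.smul_set.add ht.smul_set) ?_
  rintro _ ⟨_, ⟨x, hx, rfl⟩, _, ⟨y, hy, rfl⟩, rfl⟩
  obtain ⟨z, hz, hzxy⟩ := h x hx y hy
  exact (csInf_le hu hz).trans hzxy

section Distance
variable {n k l : ℕ}

def exactFactErrors (T : Mat (Fin n) →ₗ[ℂ] Mat (Fin n)) (k : ℕ) : Set ℝ :=
  { r : ℝ | ∃ T' : Mat (Fin n) →ₗ[ℂ] Mat (Fin n), IsUCPT T' ∧ HasExactFact k T' ∧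
    r = cbNorm (T - T') }

variable (T : Mat (Fin n) →ₗ[ℂ] Mat (Fin n))

lemma exactFactErrors_nonempty (hk : k ≠ 0) : (exactFactErrors T k).Nonempty :=
  ⟨_, LinearMap.id, isUCPT_id, hasExactFact_id hk, rfl⟩

lemma exactFactErrors_bddBelow : BddBelow (exactFactErrors T k) := by
  refine ⟨0, ?_⟩
  rintro _ ⟨T', -, -, rfl⟩
  exact cbNorm_nonneg _

lemma sInf_exactFactErrors_nonneg : 0 ≤ sInf (exactFactErrors T k) := by
  refine Real.sInf_nonneg ?_
  rintro _ ⟨T', -, -, rfl⟩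
  exact cbNorm_nonneg _

lemma exists_exactFactErrors_add_le (hkl : k + l ≠ 0) {r₁ r₂ : ℝ}
    (hr₁ : r₁ ∈ exactFactErrors T k) (hr₂ : r₂ ∈ exactFactErrors T l) :
    ∃ r ∈ exactFactErrors T (k + l), r ≤ ((k : ℝ) / (k + l)) * r₁ + ((l : ℝ) / (k + l)) * r₂ := by
  obtain ⟨T₁, hU₁, hF₁, rfl⟩ := hr₁
  obtain ⟨T₂, hU₂, hF₂, rfl⟩ := hr₂
  set a : ℝ := k / (k + l)
  set b : ℝ := l / (k + l)
  have ha : 0 ≤ a := by positivity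
  have hb : 0 ≤ b := by positivity
  have hab : a + b = 1 := by
    rw [← add_div, div_self (by exact_mod_cast hkl)]
  have hdiff : T - ((a : ℂ) • T₁ + (b : ℂ) • T₂) = (a : ℂ) • (T - T₁) + (b : ℂ) • (T - T₂) := by
    rw [smul_sub, smul_sub, sub_add_sub_comm, ← add_smul, ← Complex.ofReal_add, hab,
      Complex.ofReal_one, one_smul]
  refine ⟨_, ⟨_, hU₁.convex_comb hU₂ ha hb hab, hF₁.add hF₂, rfl⟩, ?_⟩
  calc cbNorm (T - ((a : ℂ) • T₁ + (b : ℂ) • T₂))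
      ≤ ‖(a : ℂ)‖ * cbNorm (T - T₁) + ‖(b : ℂ)‖ * cbNorm (T - T₂) := by
        rw [hdiff]
        exact (cbNorm_add_le _ _).trans (add_le_add (cbNorm_smul_le _ _) (cbNorm_smul_le _ _))
    _ = a * cbNorm (T - T₁) + b * cbNorm (T - T₂) := by
        rw [Complex.norm_of_nonneg ha, Complex.norm_of_nonneg hb]

lemma sInf_exactFactErrors_add_le (hk : k ≠ 0) (hl : l ≠ 0) :
    sInf (exactFactErrors T (k + l)) ≤ ((k : ℝ) / (k + l)) * sInf (exactFactErrors T k) +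
      ((l : ℝ) / (k + l)) * sInf (exactFactErrors T l) :=
  sInf_le_mul_sInf_add_mul_sInf (by positivity) (by positivity) (exactFactErrors_nonempty T hk)
    (exactFactErrors_bddBelow T) (exactFactErrors_nonempty T hl) (exactFactErrors_bddBelow T)
    (exactFactErrors_bddBelow T) fun _ hr₁ _ hr₂ =>
      exists_exactFactErrors_add_le T (by omega) hr₁ hr₂

end Distance

theorem delta_subadditive_and_tendsto_general {n : ℕ}
    (T : Mat (Fin n) →ₗ[ℂ] Mat (Fin n))
    (δ : ℕ → ℝ)
    (hδ : ∀ k, 1 ≤ k → δ k = sInf { r : ℝ | ∃ T' : Mat (Fin n) →ₗ[ℂ] Mat (Fin n),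
      IsUCPT T' ∧ HasExactFact k T' ∧ r = cbNorm (T - T') }) :
    (∀ k l : ℕ, 1 ≤ k → 1 ≤ l →
      δ (k + l) ≤ ((k : ℝ) / (k + l)) * δ k + ((l : ℝ) / (k + l)) * δ l) ∧
    ((⨅ k : ℕ, δ (k + 1)) = 0 →
      Filter.Tendsto (fun k => δ k) Filter.atTop (nhds 0)) := by
  have hsub : ∀ k l : ℕ, 1 ≤ k → 1 ≤ l →
      δ (k + l) ≤ ((k : ℝ) / (k + l)) * δ k + ((l : ℝ) / (k + l)) * δ l := fun k l hk hl => by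
    rw [hδ k hk, hδ l hl, hδ (k + l) (by omega)]
    exact sInf_exactFactErrors_add_le T (by omega) (by omega)
  have hbdd : BddBelow (Set.range fun k => δ (k + 1)) :=
    ⟨0, Set.forall_mem_range.mpr fun k => (hδ (k + 1) (by omega)).symm ▸
      sInf_exactFactErrors_nonneg T⟩
  exact ⟨hsub, fun h0 => h0 ▸ tendsto_iInf_of_weighted_subadditive δ hbdd hsub⟩

/-- With `δ k` the infimum of `‖T − T'‖_cb` over UCPT maps `T'` factoring
exactly through `M_n ⊗ M_k`, one has `δ (k+l) ≤ (k/(k+l)) δ k + (l/(k+l)) δ l`, and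
consequently if `inf_k δ k = 0` then `δ k → 0`. -/
theorem delta_subadditive_and_tendsto {n : ℕ}
    (T : Mat (Fin n) →ₗ[ℂ] Mat (Fin n)) (hT : IsUCPT T)
    (δ : ℕ → ℝ)
    (hδ : ∀ k, 1 ≤ k → δ k = sInf { r : ℝ | ∃ T' : Mat (Fin n) →ₗ[ℂ] Mat (Fin n),
      IsUCPT T' ∧ HasExactFact k T' ∧ r = cbNorm (T - T') }) :
    (∀ k l : ℕ, 1 ≤ k → 1 ≤ l →
      δ (k + l) ≤ ((k : ℝ) / (k + l)) * δ k + ((l : ℝ) / (k + l)) * δ l) ∧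
    ((⨅ k : ℕ, δ (k + 1)) = 0 →
      Filter.Tendsto (fun k => δ k) Filter.atTop (nhds 0)) :=
  delta_subadditive_and_tendsto_general T δ hδ
end

section
/- For every odd integer n ≥ 1, min over unitaries v ∈ U(n) of ‖(v + v^t)/2‖_2² equals 1/n, where ‖a‖_2² = (1/n)Tr(a*a). Equivalently, min_{v ∈ U(n)} (1/n)Tr(v v̄) = 2/n − 1. -/
/-! For odd `n` the matrix `v - vᵀ` is skew-symmetric of odd size, hence singular: some `x ≠ 0`
has `vᵀ x = v x`, so `(v + vᵀ)/2` maps `x` to `v x`, a vector as long as `x`. Since the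
Frobenius norm dominates the operator norm, `Tr(s* s) ≥ 1` for `s = (v + vᵀ)/2`. Equality holds
for `v = 1 ⊕ J` with `J = [[0, -1], [1, 0]]` the symplectic form, which is unitary and
skew-symmetric, so that `(v + vᵀ)/2 = e₁₁`. -/

open Matrix

namespace Matrix

section SkewSymmetric

variable {R ι : Type*} [CommRing R] [IsDomain R] [Fintype ι] [DecidableEq ι]

theorem det_eq_zero_of_transpose_eq_neg (hR : ringChar R ≠ 2) (hι : Odd (Fintype.card ι))
    {A : Matrix ι ι R} (hA : Aᵀ = -A) : A.det = 0 := by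
  have h := det_transpose A
  rw [hA, det_neg, hι.neg_one_pow, neg_one_mul] at h
  exact (Ring.eq_self_iff_eq_zero_of_char_ne_two hR).mp h

theorem exists_transpose_mulVec_eq_mulVec (hR : ringChar R ≠ 2) (hι : Odd (Fintype.card ι))
    (A : Matrix ι ι R) : ∃ x ≠ 0, Aᵀ *ᵥ x = A *ᵥ x := by
  have hskew : (A - Aᵀ)ᵀ = -(A - Aᵀ) := by rw [transpose_sub, transpose_transpose, neg_sub]
  obtain ⟨x, hx0, hx⟩ :=
    exists_mulVec_eq_zero_iff.mpr (det_eq_zero_of_transpose_eq_neg hR hι hskew)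
  exact ⟨x, hx0, (sub_eq_zero.mp (sub_mulVec A Aᵀ x ▸ hx)).symm⟩

end SkewSymmetric

section Frobenius

open scoped Matrix.Norms.Frobenius

variable {𝕜 l m n o : Type*} [RCLike 𝕜] [Fintype l] [Fintype m] [Fintype n] [Fintype o]

theorem frobenius_norm_sq_eq_re_trace (A : Matrix m n 𝕜) :
    ‖A‖ ^ 2 = RCLike.re (Aᴴ * A).trace := by
  rw [frobenius_norm_def, ← Real.sqrt_eq_rpow, Real.sq_sqrt (by positivity), Finset.sum_comm]
  simp [trace, mul_apply, RCLike.conj_mul]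

theorem frobenius_norm_unitary_mul [DecidableEq m] {U : Matrix m m 𝕜}
    (hU : U ∈ unitaryGroup m 𝕜) (A : Matrix m n 𝕜) : ‖U * A‖ = ‖A‖ := by
  rw [← sq_eq_sq₀ (norm_nonneg _) (norm_nonneg _), frobenius_norm_sq_eq_re_trace,
    frobenius_norm_sq_eq_re_trace, conjTranspose_mul, Matrix.mul_assoc, ← Matrix.mul_assoc Uᴴ,
    ← star_eq_conjTranspose, mem_unitaryGroup_iff'.mp hU, Matrix.one_mul]

theorem frobenius_norm_submatrix_equiv (A : Matrix m n 𝕜) (e : l ≃ m) (f : o ≃ n) :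
    ‖A.submatrix e f‖ = ‖A‖ := by
  simp only [frobenius_norm_def, submatrix_apply]
  congr 1
  exact Fintype.sum_equiv e _ _ fun i => Fintype.sum_equiv f _ _ fun j => rfl

end Frobenius

section Unitary

variable {α m n : Type*} [CommRing α] [StarRing α] [Fintype m] [Fintype n] [DecidableEq m]
  [DecidableEq n]

theorem fromBlocks_mem_unitaryGroup {A : Matrix m m α} {D : Matrix n n α}
    (hA : A ∈ unitaryGroup m α) (hD : D ∈ unitaryGroup n α) :
    fromBlocks A 0 0 D ∈ unitaryGroup (m ⊕ n) α := by
  rw [mem_unitaryGroup_iff', star_eq_conjTranspose] at *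
  simp [fromBlocks_conjTranspose, fromBlocks_multiply, hA, hD]

theorem J_mem_unitaryGroup : J m α ∈ unitaryGroup (m ⊕ m) α := by
  have hJ : (J m α)ᴴ = (J m α)ᵀ := by
    rw [conjTranspose, transpose_map]
    exact congrArg transpose (map_J m (starRingEnd α))
  rw [mem_unitaryGroup_iff', star_eq_conjTranspose, hJ, J_transpose, neg_mul, J_squared,
    neg_neg]

theorem submatrix_mem_unitaryGroup {A : Matrix n n α} (hA : A ∈ unitaryGroup n α) (e : m ≃ n) :
    A.submatrix e e ∈ unitaryGroup m α := by
  rw [mem_unitaryGroup_iff', star_eq_conjTranspose] at *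
  rw [conjTranspose_submatrix, submatrix_mul_equiv, hA, submatrix_one_equiv]

end Unitary

section SymmetricPart

open scoped Matrix.Norms.Frobenius

variable {𝕜 ι : Type*} [RCLike 𝕜] [Fintype ι] [DecidableEq ι]

theorem one_le_frobenius_norm_symmetricPart (hι : Odd (Fintype.card ι)) {v : Matrix ι ι 𝕜}
    (hv : v ∈ unitaryGroup ι 𝕜) : 1 ≤ ‖(2 : 𝕜)⁻¹ • (v + vᵀ)‖ := by
  obtain ⟨x, hx0, hx⟩ :=
    exists_transpose_mulVec_eq_mulVec (by rw [ringChar.eq_zero]; norm_num) hι v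
  set X : Matrix ι Unit 𝕜 := replicateCol Unit x
  have hX : 0 < ‖X‖ := by simpa [X] using hx0
  have hsym : (2 : 𝕜)⁻¹ • (v + vᵀ) * X = v * X := by
    rw [Matrix.smul_mul, Matrix.add_mul, ← replicateCol_mulVec, ← replicateCol_mulVec, hx,
      ← two_smul 𝕜, smul_smul, inv_mul_cancel₀ two_ne_zero, one_smul]
  refine le_of_mul_le_mul_right ?_ hX
  calc 1 * ‖X‖ = ‖v * X‖ := by rw [one_mul, frobenius_norm_unitary_mul hv]
    _ = ‖(2 : 𝕜)⁻¹ • (v + vᵀ) * X‖ := by rw [hsym]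
    _ ≤ ‖(2 : 𝕜)⁻¹ • (v + vᵀ)‖ * ‖X‖ := frobenius_norm_mul _ _

theorem frobenius_norm_symmetricPart_fromBlocks_one_J (l : Type*) [Fintype l]
    [DecidableEq l] :
    ‖(2 : 𝕜)⁻¹ • (fromBlocks (1 : Matrix Unit Unit 𝕜) 0 0 (J l 𝕜) +
      (fromBlocks (1 : Matrix Unit Unit 𝕜) 0 0 (J l 𝕜))ᵀ)‖ = 1 := by
  rw [fromBlocks_transpose, fromBlocks_add, transpose_one, J_transpose, add_neg_cancel,
    ← two_smul 𝕜 (1 : Matrix Unit Unit 𝕜), fromBlocks_smul]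
  simp [smul_smul, frobenius_norm_def, Fintype.sum_sum_type]

theorem exists_mem_unitaryGroup_frobenius_norm_symmetricPart_eq_one
    (hι : Odd (Fintype.card ι)) : ∃ v ∈ unitaryGroup ι 𝕜, ‖(2 : 𝕜)⁻¹ • (v + vᵀ)‖ = 1 := by
  obtain ⟨m, hm⟩ := hι
  let e : ι ≃ Unit ⊕ (Fin m ⊕ Fin m) := Fintype.equivOfCardEq (by simp [hm]; omega)
  have hv : fromBlocks (1 : Matrix Unit Unit 𝕜) 0 0 (J (Fin m) 𝕜) ∈ unitaryGroup _ 𝕜 :=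
    fromBlocks_mem_unitaryGroup (one_mem _) J_mem_unitaryGroup
  refine ⟨_, submatrix_mem_unitaryGroup hv e, ?_⟩
  have hsub (A : Matrix (Unit ⊕ (Fin m ⊕ Fin m)) (Unit ⊕ (Fin m ⊕ Fin m)) 𝕜) :
      (2 : 𝕜)⁻¹ • (A.submatrix e e + (A.submatrix e e)ᵀ) =
        ((2 : 𝕜)⁻¹ • (A + Aᵀ)).submatrix e e := by
    rw [transpose_submatrix]; rfl
  rw [hsub, frobenius_norm_submatrix_equiv, frobenius_norm_symmetricPart_fromBlocks_one_J]

end SymmetricPart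

end Matrix

theorem min_symmetric_part_unitary_general {n : ℕ} (hodd : Odd n) :
    IsLeast { r : ℝ | ∃ v ∈ Matrix.unitaryGroup (Fin n) ℂ,
        r = ((Matrix.trace ((((2 : ℂ)⁻¹ • (v + vᵀ))ᴴ * ((2 : ℂ)⁻¹ • (v + vᵀ)))) / n).re) }
      (1 / n) := by
  have hι : Odd (Fintype.card (Fin n)) := by rwa [Fintype.card_fin]
  open scoped Matrix.Norms.Frobenius in
  have hval (v : Matrix (Fin n) (Fin n) ℂ) :
      ((trace (((2 : ℂ)⁻¹ • (v + vᵀ))ᴴ * ((2 : ℂ)⁻¹ • (v + vᵀ)))) / n).re =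
        ‖(2 : ℂ)⁻¹ • (v + vᵀ)‖ ^ 2 / n := by
    rw [Complex.div_natCast_re, frobenius_norm_sq_eq_re_trace, RCLike.re_to_complex]
  refine ⟨?_, ?_⟩
  · obtain ⟨v, hv, hv1⟩ :=
      exists_mem_unitaryGroup_frobenius_norm_symmetricPart_eq_one (𝕜 := ℂ) hι
    exact ⟨v, hv, by rw [hval, hv1, one_pow]⟩
  · rintro r ⟨v, hv, rfl⟩
    rw [hval]
    gcongr
    exact one_le_pow₀ (one_le_frobenius_norm_symmetricPart hι hv)

/-- for odd `n`, the minimum of `‖(v + vᵗ)/2‖₂²` over unitaries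
`v ∈ U(n)` equals `1/n`, where `‖a‖₂² = (1/n) Tr(aᴴ a)`. -/
theorem min_symmetric_part_unitary {n : ℕ} (hodd : Odd n) (hn : 1 ≤ n) :
    IsLeast { r : ℝ | ∃ v ∈ Matrix.unitaryGroup (Fin n) ℂ,
        r = ((Matrix.trace ((((2 : ℂ)⁻¹ • (v + vᵀ))ᴴ * ((2 : ℂ)⁻¹ • (v + vᵀ)))) / n).re) }
      (1 / n) :=
  min_symmetric_part_unitary_general hodd
end

section
/- Let N be a finite von Neumann algebra with normal faithful tracial state τ_N, let u ∈ M_3(N) be unitary, and set b = (u − u^T)/2. Then ‖b‖_4^4 ≥ (3/2)‖b‖_2^4, where ‖x‖_p = ((τ_3 ⊗ τ_N)(|x|^p))^{1/p}. -/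
open Matrix BigOperators

noncomputable section

/-- The trace `τ₃ ⊗ τ_N` on `M₃(N)`. -/
def trN {N : Type*} [CStarAlgebra N] (τ : N →ₗ[ℂ] ℂ)
    (M : Matrix (Fin 3) (Fin 3) N) : ℂ :=
  (3 : ℂ)⁻¹ * ∑ i, τ (M i i)

/-!
An antisymmetric `3 × 3` matrix is `b = !![0, z, -y; -z, 0, x; y, -x, 0]`. Its Gram matrix `bᴴ b`
has trace `2 p` with `p = x⋆x + y⋆y + z⋆z`, and by cyclicity of `τ` the trace of `(bᴴ b)²` is
`τ(p²) + τ(q²)` with `q = xx⋆ + yy⋆ + zz⋆`, where `τ q = τ p`. The theorem is therefore the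
Cauchy–Schwarz inequality `(τ s)² ≤ τ(s²)` for `s = p` and `s = q`.
-/

theorem sq_re_map_le_re_map_mul_self {A : Type*} [Ring A] [StarRing A] [Algebra ℂ A]
    [StarModule ℂ A] (τ : A →ₗ[ℂ] ℂ) (hτ1 : τ 1 = 1)
    (hτpos : ∀ a : A, 0 ≤ (τ (star a * a)).re) {s : A} (hs : IsSelfAdjoint s) :
    (τ s).re ^ 2 ≤ (τ (s * s)).re := by
  have key (r : ℝ) : 0 ≤ (τ (s * s)).re - 2 * r * (τ s).re + r ^ 2 := by
    have hc : IsSelfAdjoint (s - (r : ℂ) • 1) := by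
      simp [IsSelfAdjoint, hs.star_eq, star_smul]
    have := hτpos (s - (r : ℂ) • 1)
    rw [hc.star_eq] at this
    simp only [Complex.coe_smul, mul_sub, sub_mul, Algebra.smul_mul_assoc, one_mul,
      Algebra.mul_smul_comm, mul_one, map_sub, LinearMap.map_smul_of_tower, Complex.real_smul, hτ1,
      Complex.sub_re, Complex.mul_re, Complex.ofReal_re, Complex.ofReal_im, zero_mul, sub_zero,
      mul_zero] at this
    linarith
  linarith [key (τ s).re]

def skew3 {N : Type*} [Zero N] [Neg N] (x y z : N) : Matrix (Fin 3) (Fin 3) N :=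
  !![0, z, -y; -z, 0, x; y, -x, 0]

theorem smul_sub_transpose_eq_skew3 {R N : Type*} [Monoid R] [AddCommGroup N]
    [DistribMulAction R N] (c : R) (u : Matrix (Fin 3) (Fin 3) N) :
    c • (u - uᵀ) = skew3 (c • (u 1 2 - u 2 1)) (c • (u 2 0 - u 0 2)) (c • (u 0 1 - u 1 0)) := by
  ext i j
  fin_cases i <;> fin_cases j <;> simp [skew3, ← smul_neg]

section Trace

variable {N : Type*} [Ring N] [StarRing N]

theorem conjTranspose_mul_self_skew3 (x y z : N) :
    (skew3 x y z)ᴴ * skew3 x y z =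
      !![star y * y + star z * z, -(star y * x), -(star z * x);
        -(star x * y), star z * z + star x * x, -(star z * y);
        -(star x * z), -(star y * z), star x * x + star y * y] := by
  ext i j
  fin_cases i <;> fin_cases j <;> simp [skew3, mul_apply, Fin.sum_univ_three, add_comm]

theorem trace_conjTranspose_mul_self_skew3 (x y z : N) :
    ((skew3 x y z)ᴴ * skew3 x y z).trace = 2 • (star x * x + star y * y + star z * z) := by
  rw [conjTranspose_mul_self_skew3, trace_fin_three]
  simp only [of_apply, cons_val', cons_val, cons_val_fin_one]
  abel

variable {R F : Type*} [CommRing R] [FunLike F N R] [AddMonoidHomClass F N R] (τ : F)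

theorem map_add_mul_star_eq (hτ : ∀ a b : N, τ (a * b) = τ (b * a)) (x y z : N) :
    τ (x * star x + y * star y + z * star z) = τ (star x * x + star y * y + star z * z) := by
  simp only [map_add, hτ x (star x), hτ y (star y), hτ z (star z)]

theorem map_trace_sq_conjTranspose_mul_self_skew3 (hτ : ∀ a b : N, τ (a * b) = τ (b * a))
    (x y z : N) :
    τ (((skew3 x y z)ᴴ * skew3 x y z) * ((skew3 x y z)ᴴ * skew3 x y z)).trace
      = τ ((star x * x + star y * y + star z * z) * (star x * x + star y * y + star z * z))
        + τ ((x * star x + y * star y + z * star z) * (x * star x + y * star y + z * star z)) := by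
  have cyc (a c : N) : τ (star a * c * (star c * a)) = τ (c * star c * (a * star a)) :=
    calc τ (star a * c * (star c * a)) = τ ((star a * (c * star c)) * a) := by
          simp only [mul_assoc]
      _ = τ ((a * star a) * (c * star c)) := by rw [hτ]; simp only [mul_assoc]
      _ = τ (c * star c * (a * star a)) := hτ _ _
  rw [conjTranspose_mul_self_skew3, trace_fin_three]
  simp only [mul_apply, Fin.sum_univ_three, of_apply, cons_val', cons_val, cons_val_fin_one,
    neg_mul, mul_neg, neg_neg, mul_add, add_mul, map_add]
  linear_combination cyc x x + cyc y y + cyc z z + cyc y x + cyc x y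
      + cyc z x + cyc x z + cyc z y + cyc y z

end Trace

theorem re_trN {N : Type*} [CStarAlgebra N] (τ : N →ₗ[ℂ] ℂ) (M : Matrix (Fin 3) (Fin 3) N) :
    (trN τ M).re = (τ M.trace).re / 3 := by
  rw [trN, trace, ← map_sum]
  simp [Complex.mul_re, div_eq_inv_mul]

theorem antisym_part_four_norm_ge_general {N : Type*} [CStarAlgebra N]
    (τ : N →ₗ[ℂ] ℂ) (hτ1 : τ 1 = 1) (hτtr : ∀ a b : N, τ (a * b) = τ (b * a))
    (hτpos : ∀ a : N, 0 ≤ (τ (star a * a)).re ∧ (τ (star a * a)).im = 0)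
    (u : Matrix (Fin 3) (Fin 3) N)
    (b : Matrix (Fin 3) (Fin 3) N) (hb : b = (2 : ℂ)⁻¹ • (u - uᵀ)) :
    (3 / 2 : ℝ) * ((trN τ (bᴴ * b)).re) ^ 2 ≤ (trN τ ((bᴴ * b) * (bᴴ * b))).re := by
  obtain ⟨x, y, z, rfl⟩ : ∃ x y z : N, b = skew3 x y z :=
    ⟨_, _, _, hb.trans (smul_sub_transpose_eq_skew3 _ u)⟩
  have hτpos' (a : N) : 0 ≤ (τ (star a * a)).re := (hτpos a).1
  have hp := sq_re_map_le_re_map_mul_self τ hτ1 hτpos'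
    (((IsSelfAdjoint.star_mul_self x).add (.star_mul_self y)).add (.star_mul_self z))
  have hq := sq_re_map_le_re_map_mul_self τ hτ1 hτpos'
    (((IsSelfAdjoint.mul_star_self x).add (.mul_star_self y)).add (.mul_star_self z))
  rw [map_add_mul_star_eq τ hτtr] at hq
  rw [re_trN, re_trN, trace_conjTranspose_mul_self_skew3,
    map_trace_sq_conjTranspose_mul_self_skew3 τ hτtr, map_nsmul, Complex.re_nsmul, Complex.add_re,
    two_nsmul]
  linarith

/-- for a unitary `u` in `M₃(N)` over a unital C*-algebra (e.g. a finite
von Neumann algebra) with a faithful tracial state `τ`, the anti-symmetric part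
`b = (u − uᵀ)/2` satisfies `‖b‖₄⁴ ≥ (3/2) ‖b‖₂⁴`, i.e.
`τ̃((bᴴb)²) ≥ (3/2) (τ̃(bᴴb))²`. -/
theorem antisym_part_four_norm_ge {N : Type*} [CStarAlgebra N]
    (τ : N →ₗ[ℂ] ℂ) (hτ1 : τ 1 = 1) (hτtr : ∀ a b : N, τ (a * b) = τ (b * a))
    (hτpos : ∀ a : N, 0 ≤ (τ (star a * a)).re ∧ (τ (star a * a)).im = 0)
    (hτfaith : ∀ a : N, τ (star a * a) = 0 → a = 0)
    (u : Matrix (Fin 3) (Fin 3) N) (hu : uᴴ * u = 1 ∧ u * uᴴ = 1)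
    (b : Matrix (Fin 3) (Fin 3) N) (hb : b = (2 : ℂ)⁻¹ • (u - uᵀ)) :
    (3 / 2 : ℝ) * ((trN τ (bᴴ * b)).re) ^ 2 ≤ (trN τ ((bᴴ * b) * (bᴴ * b))).re :=
  antisym_part_four_norm_ge_general τ hτ1 hτtr hτpos u b hb

end
end

section
/- Let (M, τ̃) be a von Neumann algebra with faithful tracial state and let h ∈ M satisfy 0 ≤ h ≤ 2, τ̃(h²) ≤ (6/5)τ̃(h), and τ̃(h⁴) ≥ (3/2)τ̃(h²)². Then τ̃(h²) ≤ 4/3. -/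
/-!
On `[0, 2]` the quartic `8 - 18t + 11t² - t⁴ = (t - 1)²(2 - t)(t + 4)` is nonnegative, so by the
continuous functional calculus the element `8 - 18h + 11h² - h⁴` is positive whenever `0 ≤ h ≤ 2`.
Applying the positive functional `Re τ` gives `m₄ - 11m₂ + 18m₁ - 8 ≤ 0` for the moments
`mₖ = Re τ(hᵏ)`, and the two moment hypotheses turn this into `3m₂² + 8m₂ - 16 ≤ 0`,
i.e. `(3m₂ - 4)(m₂ + 4) ≤ 0`.
-/

open Set

lemma quartic_nonneg_of_mem_Icc {t : ℝ} (ht : t ∈ Icc (0 : ℝ) 2) :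
    0 ≤ 8 - 18 * t + 11 * t ^ 2 - t ^ 4 := by
  obtain ⟨ht0, ht2⟩ := ht
  have hfactor : 8 - 18 * t + 11 * t ^ 2 - t ^ 4 = (t - 1) ^ 2 * ((2 - t) * (t + 4)) := by ring
  rw [hfactor]
  have : 0 ≤ 2 - t := by linarith
  positivity

lemma moment_le_of_quartic_nonneg {m₁ m₂ m₄ : ℝ} (hquartic : 0 ≤ 8 - 18 * m₁ + 11 * m₂ - m₄)
    (hm₂ : m₂ ≤ 6 / 5 * m₁) (hm₄ : 3 / 2 * m₂ ^ 2 ≤ m₄) : m₂ ≤ 4 / 3 := by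
  nlinarith [sq_nonneg (m₂ - 4 / 3)]

section CStarAlgebra

variable {A : Type*} [CStarAlgebra A] [PartialOrder A] [StarOrderedRing A]

lemma spectrum_subset_Icc_of_nonneg_of_le_two {h : A} (h₀ : 0 ≤ h) (h₂ : h ≤ 2) :
    spectrum ℝ h ⊆ Icc 0 2 := fun t ht =>
  ⟨spectrum_nonneg_of_nonneg h₀ ht,
    (le_algebraMap_iff_spectrum_le (r := (2 : ℝ)) (a := h)).mp (by rwa [map_ofNat]) t ht⟩

lemma quartic_nonneg_of_nonneg_of_le_two {h : A} (h₀ : 0 ≤ h) (h₂ : h ≤ 2) :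
    0 ≤ 8 - 18 * h + 11 * (h * h) - h * h * h * h := by
  have hcfc := cfc_nonneg (a := h) (f := fun t : ℝ => 8 - 18 * t + 11 * t ^ 2 - t ^ 4)
    fun t ht => quartic_nonneg_of_mem_Icc (spectrum_subset_Icc_of_nonneg_of_le_two h₀ h₂ ht)
  rw [cfc_sub .., cfc_add .., cfc_sub .., cfc_const_mul .., cfc_const_mul .., cfc_pow .., cfc_pow ..,
    cfc_id' .., cfc_const .., map_ofNat] at hcfc
  simpa [pow_succ, ofNat_smul_eq_nsmul, Nat.ofNat_nsmul_eq_mul, mul_assoc] using hcfc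

lemma re_nonneg_of_nonneg (τ : A →ₗ[ℂ] ℂ) (hτ : ∀ a : A, 0 ≤ (τ (star a * a)).re) {a : A}
    (ha : 0 ≤ a) : 0 ≤ (τ a).re := by
  obtain ⟨b, rfl⟩ := CStarAlgebra.nonneg_iff_eq_star_mul_self.mp ha
  exact hτ b

end CStarAlgebra

lemma re_map_quartic {A : Type*} [Ring A] [Algebra ℂ A] (τ : A →ₗ[ℂ] ℂ) (hτ1 : τ 1 = 1) (h : A) :
    (τ (8 - 18 * h + 11 * (h * h) - h * h * h * h)).re =
      8 - 18 * (τ h).re + 11 * (τ (h * h)).re - (τ (h * h * h * h)).re := by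
  have hτ_ofNat (n : ℕ) [n.AtLeastTwo] : τ (ofNat(n) : A) = ofNat(n) := by
    rw [← mul_one (ofNat(n) : A), ← Nat.ofNat_nsmul_eq_mul, map_nsmul, hτ1,
      Nat.ofNat_nsmul_eq_mul, mul_one]
  simp only [← Nat.ofNat_nsmul_eq_mul, map_sub, map_add, map_nsmul, hτ_ofNat]
  simp

theorem moment_bound_general {A : Type*} [CStarAlgebra A]
    (τ : A →ₗ[ℂ] ℂ) (hτ1 : τ 1 = 1)
    (hτpos : ∀ a : A, 0 ≤ (τ (star a * a)).re ∧ (τ (star a * a)).im = 0)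
    (h : A)
    (h_nonneg : ∃ c : A, h = star c * c)
    (h_le_two : ∃ c : A, (2 : A) - h = star c * c)
    (hm2 : (τ (h * h)).re ≤ (6 / 5) * (τ h).re)
    (hm4 : (3 / 2) * ((τ (h * h)).re) ^ 2 ≤ (τ (h * h * h * h)).re) :
    (τ (h * h)).re ≤ 4 / 3 := by
  let := CStarAlgebra.spectralOrder A
  have := CStarAlgebra.spectralOrderedRing A
  obtain ⟨c, rfl⟩ := h_nonneg
  obtain ⟨d, hd⟩ := h_le_two
  have h₂ : star c * c ≤ 2 := sub_nonneg.mp (hd ▸ star_mul_self_nonneg d)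
  have hquartic := re_nonneg_of_nonneg τ (fun a => (hτpos a).1)
    (quartic_nonneg_of_nonneg_of_le_two (star_mul_self_nonneg c) h₂)
  rw [re_map_quartic τ hτ1] at hquartic
  exact moment_le_of_quartic_nonneg hquartic hm2 hm4

/-- in a (C*-)algebra with a faithful tracial state `τ`, if `0 ≤ h ≤ 2`,
`τ(h²) ≤ (6/5) τ(h)` and `τ(h⁴) ≥ (3/2) τ(h²)²`, then `τ(h²) ≤ 4/3`. -/
theorem moment_bound {A : Type*} [CStarAlgebra A]
    (τ : A →ₗ[ℂ] ℂ) (hτ1 : τ 1 = 1) (hτtr : ∀ a b : A, τ (a * b) = τ (b * a))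
    (hτpos : ∀ a : A, 0 ≤ (τ (star a * a)).re ∧ (τ (star a * a)).im = 0)
    (hτfaith : ∀ a : A, τ (star a * a) = 0 → a = 0)
    (h : A)
    (h_nonneg : ∃ c : A, h = star c * c)
    (h_le_two : ∃ c : A, (2 : A) - h = star c * c)
    (hm2 : (τ (h * h)).re ≤ (6 / 5) * (τ h).re)
    (hm4 : (3 / 2) * ((τ (h * h)).re) ^ 2 ≤ (τ (h * h * h * h)).re) :
    (τ (h * h)).re ≤ 4 / 3 :=
  moment_bound_general τ hτ1 hτpos h h_nonneg h_le_two hm2 hm4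
end

section
/- Under the standard identification M_3(ℂ)^{⊗3} ≅ M_{27}(ℂ), the Holevo–Werner channels in dimension 27 decompose as W_{27}^+ = (1/7)(4 W^{+++} + 3 W_m^-) and W_{27}^- = (1/13)(12 W_m^+ + W^{---}), where W^{+++} = (W_3^+)^{⊗3}, W^{---} = (W_3^-)^{⊗3}, W_m^+ is the average of the three tensor products containing two W_3^+ factors and one W_3^- factor, and W_m^- the average of those containing one W_3^+ and two W_3^-. -/
/-!
Both `W₃⁺` and `W₃⁻` are combinations of `S x = Tr(x) 1` and the transpose `t`, and both maps are
multiplicative for Kronecker products: `Tr (A ⊗ B) = Tr A · Tr B`, `1 ⊗ 1 = 1` and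
`(A ⊗ B)ᵀ = Aᵀ ⊗ Bᵀ`. Hence `S^{⊗3}` and `t^{⊗3}` are `S` and `t` on `M₂₇`, and expanding the
triple tensor products trilinearly, all mixed terms such as `S ⊗ S ⊗ t` cancel in the stated
combinations, leaving the required multiples of `S` and `t`.
-/

open Matrix BigOperators

noncomputable section

/-- The triple tensor product `T₁ ⊗ T₂ ⊗ T₃` of linear maps on `M₃(ℂ)`, acting on
`M₃ ⊗ M₃ ⊗ M₃ ≅ M₂₇` (Kronecker identification). -/
def tensor3 (T₁ T₂ T₃ : Matrix (Fin 3) (Fin 3) ℂ →ₗ[ℂ] Matrix (Fin 3) (Fin 3) ℂ) :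
    Matrix (Fin 3 × Fin 3 × Fin 3) (Fin 3 × Fin 3 × Fin 3) ℂ →ₗ[ℂ]
      Matrix (Fin 3 × Fin 3 × Fin 3) (Fin 3 × Fin 3 × Fin 3) ℂ where
  toFun M := ∑ p, ∑ q, ∑ v, ∑ w, ∑ r, ∑ z, M (p, v, r) (q, w, z) •
      ((T₁ (Matrix.single p q 1)).kronecker
        ((T₂ (Matrix.single v w 1)).kronecker (T₃ (Matrix.single r z 1))))
  map_add' M N := by
    simp [Matrix.add_apply, add_smul, Finset.sum_add_distrib]
  map_smul' c M := by
    simp [Matrix.smul_apply, smul_smul, Finset.smul_sum]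

open Kronecker

local notation "M₃" => Matrix (Fin 3) (Fin 3) ℂ
local notation "M₂₇" => Matrix (Fin 3 × Fin 3 × Fin 3) (Fin 3 × Fin 3 × Fin 3) ℂ

section MatrixMaps

def traceSmulOne (n R : Type*) [Fintype n] [DecidableEq n] [CommSemiring R] :
    Matrix n n R →ₗ[R] Matrix n n R :=
  (traceLinearMap n R R).smulRight 1

def transposeMap (n R : Type*) [Semiring R] : Matrix n n R →ₗ[R] Matrix n n R :=
  (transposeLinearEquiv n n R R).toLinearMap

variable {m n R : Type*}

@[simp]
lemma traceSmulOne_apply [Fintype n] [DecidableEq n] [CommSemiring R] (x : Matrix n n R) :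
    traceSmulOne n R x = x.trace • 1 := rfl

@[simp]
lemma transposeMap_apply [Semiring R] (x : Matrix n n R) : transposeMap n R x = xᵀ := rfl

lemma traceSmulOne_kronecker [Fintype m] [DecidableEq m] [Fintype n] [DecidableEq n]
    [CommSemiring R] (A : Matrix m m R) (B : Matrix n n R) :
    traceSmulOne (m × n) R (A ⊗ₖ B) = traceSmulOne m R A ⊗ₖ traceSmulOne n R B := by
  simp only [traceSmulOne_apply, trace_kronecker, smul_kronecker, kronecker_smul, one_kronecker_one,
    smul_smul, mul_comm]

lemma transposeMap_kronecker [Semiring R] (A : Matrix m m R) (B : Matrix n n R) :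
    transposeMap (m × n) R (A ⊗ₖ B) = transposeMap m R A ⊗ₖ transposeMap n R B :=
  (kroneckerMap_transpose _ A B).symm

end MatrixMaps

lemma tensor3_apply (T₁ T₂ T₃ : M₃ →ₗ[ℂ] M₃) (M : M₂₇) :
    tensor3 T₁ T₂ T₃ M = ∑ p, ∑ q, ∑ v, ∑ w, ∑ r, ∑ z, M (p, v, r) (q, w, z) •
      (T₁ (single p q 1) ⊗ₖ (T₂ (single v w 1) ⊗ₖ T₃ (single r z 1))) := rfl

lemma tensor3_single (T₁ T₂ T₃ : M₃ →ₗ[ℂ] M₃) (p q v w r z : Fin 3) :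
    tensor3 T₁ T₂ T₃ (single (p, v, r) (q, w, z) 1) =
      T₁ (single p q 1) ⊗ₖ (T₂ (single v w 1) ⊗ₖ T₃ (single r z 1)) := by
  simp [tensor3_apply, single_apply, ite_smul, ite_and]

lemma tensor3_eq_of_kronecker (T₁ T₂ T₃ : M₃ →ₗ[ℂ] M₃) (L : M₂₇ →ₗ[ℂ] M₂₇)
    (h : ∀ A B C, L (A ⊗ₖ (B ⊗ₖ C)) = T₁ A ⊗ₖ (T₂ B ⊗ₖ T₃ C)) : tensor3 T₁ T₂ T₃ = L := by
  refine ext_linearMap ℂ fun ⟨p, v, r⟩ ⟨q, w, z⟩ => LinearMap.ext_ring ?_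
  have h_single : single (p, v, r) (q, w, z) (1 : ℂ) =
      single p q 1 ⊗ₖ (single v w 1 ⊗ₖ single r z 1) := by
    simp only [single_kronecker_single, mul_one]
  simp only [LinearMap.coe_comp, Function.comp_apply, singleLinearMap_apply]
  rw [tensor3_single, h_single, h]

lemma tensor3_traceSmulOne :
    tensor3 (traceSmulOne _ ℂ) (traceSmulOne _ ℂ) (traceSmulOne _ ℂ) = traceSmulOne _ ℂ :=
  tensor3_eq_of_kronecker _ _ _ _ fun A B C => by
    rw [traceSmulOne_kronecker, traceSmulOne_kronecker]

lemma tensor3_transposeMap :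
    tensor3 (transposeMap _ ℂ) (transposeMap _ ℂ) (transposeMap _ ℂ) = transposeMap _ ℂ :=
  tensor3_eq_of_kronecker _ _ _ _ fun A B C => by
    rw [transposeMap_kronecker, transposeMap_kronecker]

section Multilinear

variable (T T' T₁ T₂ T₃ : M₃ →ₗ[ℂ] M₃) (c : ℂ) (M : M₂₇)

lemma tensor3_add_left : tensor3 (T + T') T₂ T₃ M = tensor3 T T₂ T₃ M + tensor3 T' T₂ T₃ M := by
  simp only [tensor3_apply, LinearMap.add_apply, add_kronecker, smul_add, Finset.sum_add_distrib]

lemma tensor3_add_mid : tensor3 T₁ (T + T') T₃ M = tensor3 T₁ T T₃ M + tensor3 T₁ T' T₃ M := by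
  simp only [tensor3_apply, LinearMap.add_apply, add_kronecker, kronecker_add, smul_add,
    Finset.sum_add_distrib]

lemma tensor3_add_right : tensor3 T₁ T₂ (T + T') M = tensor3 T₁ T₂ T M + tensor3 T₁ T₂ T' M := by
  simp only [tensor3_apply, LinearMap.add_apply, kronecker_add, smul_add, Finset.sum_add_distrib]

lemma tensor3_smul_left : tensor3 (c • T) T₂ T₃ M = c • tensor3 T T₂ T₃ M := by
  simp only [tensor3_apply, LinearMap.smul_apply, smul_kronecker, Finset.smul_sum, smul_comm c]

lemma tensor3_smul_mid : tensor3 T₁ (c • T) T₃ M = c • tensor3 T₁ T T₃ M := by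
  simp only [tensor3_apply, LinearMap.smul_apply, smul_kronecker, kronecker_smul, Finset.smul_sum,
    smul_comm c]

lemma tensor3_smul_right : tensor3 T₁ T₂ (c • T) M = c • tensor3 T₁ T₂ T M := by
  simp only [tensor3_apply, LinearMap.smul_apply, kronecker_smul, Finset.smul_sum, smul_comm c]

end Multilinear

/-- under `M₃(ℂ)^{⊗3} ≅ M₂₇(ℂ)`, the Holevo–Werner channels in dimension
27 decompose as `W₂₇⁺ = (1/7)(4 W⁺⁺⁺ + 3 W_m⁻)` and `W₂₇⁻ = (1/13)(12 W_m⁺ + W⁻⁻⁻)`,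
where `W_m⁺` (resp. `W_m⁻`) is the average of the three tensor products with two `W₃⁺`
(resp. two `W₃⁻`) factors. -/
theorem W27_decomposition
    (Wp Wm : Matrix (Fin 3) (Fin 3) ℂ →ₗ[ℂ] Matrix (Fin 3) (Fin 3) ℂ)
    (hWp : ∀ x, Wp x = (4 : ℂ)⁻¹ • (x.trace • (1 : Matrix (Fin 3) (Fin 3) ℂ) + xᵀ))
    (hWm : ∀ x, Wm x = (2 : ℂ)⁻¹ • (x.trace • (1 : Matrix (Fin 3) (Fin 3) ℂ) - xᵀ)) :
    ∀ M : Matrix (Fin 3 × Fin 3 × Fin 3) (Fin 3 × Fin 3 × Fin 3) ℂ,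
      ((28 : ℂ)⁻¹ • (M.trace • (1 : Matrix (Fin 3 × Fin 3 × Fin 3) (Fin 3 × Fin 3 × Fin 3) ℂ) + Mᵀ)
        = (7 : ℂ)⁻¹ • ((4 : ℂ) • tensor3 Wp Wp Wp M
            + (3 : ℂ) • ((3 : ℂ)⁻¹ • (tensor3 Wp Wm Wm M + tensor3 Wm Wp Wm M
                + tensor3 Wm Wm Wp M)))) ∧
      ((26 : ℂ)⁻¹ • (M.trace • (1 : Matrix (Fin 3 × Fin 3 × Fin 3) (Fin 3 × Fin 3 × Fin 3) ℂ) - Mᵀ)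
        = (13 : ℂ)⁻¹ • ((12 : ℂ) • ((3 : ℂ)⁻¹ • (tensor3 Wp Wp Wm M + tensor3 Wp Wm Wp M
                + tensor3 Wm Wp Wp M))
            + tensor3 Wm Wm Wm M)) := by
  have hWp' : Wp = (4 : ℂ)⁻¹ • traceSmulOne _ ℂ + (4 : ℂ)⁻¹ • transposeMap _ ℂ :=
    LinearMap.ext fun x => by simp [hWp, smul_add]
  have hWm' : Wm = (2 : ℂ)⁻¹ • traceSmulOne _ ℂ + (-(2 : ℂ)⁻¹) • transposeMap _ ℂ :=
    LinearMap.ext fun x => by simp [hWm, sub_eq_add_neg]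
  intro M
  have hS := LinearMap.congr_fun tensor3_traceSmulOne M
  have hT := LinearMap.congr_fun tensor3_transposeMap M
  simp only [traceSmulOne_apply, transposeMap_apply] at hS hT
  subst hWp' hWm'
  constructor <;>
  · simp only [tensor3_add_left, tensor3_add_mid, tensor3_add_right, tensor3_smul_left,
      tensor3_smul_mid, tensor3_smul_right, hS, hT]
    match_scalars <;> ring

end
end

section
/- Define the 3×3 matrix B expressing Q_1 = W⁺⊗W⁺, Q_2 = (2/27)W⁺⊗W⁺ + (25/27)W⁻⊗W⁻, Q_3 = (2/3)W_m + (1/3)W⁻⊗W⁻ in the basis (W⁺⊗W⁺, W_m, W⁻⊗W⁻), i.e. B has columns (1,0,0)^T, (2/27, 0, 25/27)^T, (0, 2/3, 1/3)^T. Then for λ ∈ [(−3+√51)/21, 1/2], the coordinates p(λ) = B^{-1}(λ², 2λ(1−λ), (1−λ)²)^T are all nonnegative and sum to 1; explicitly p_1(λ) = (21λ² + 6λ − 2)/25, p_2(λ) = 27(2λ² − 3λ + 1)/25, p_3(λ) = 3λ(1−λ). -/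
open Matrix BigOperators

noncomputable section

/-- with `B` the matrix whose columns express
`Q₁ = W⁺⊗W⁺`, `Q₂ = (2/27)W⁺⊗W⁺ + (25/27)W⁻⊗W⁻`, `Q₃ = (2/3)W_m + (1/3)W⁻⊗W⁻` in the
basis `(W⁺⊗W⁺, W_m, W⁻⊗W⁻)`, for every `λ ∈ [(−3+√51)/21, 1/2]` the coordinate vector
`p = B⁻¹ (λ², 2λ(1−λ), (1−λ)²)ᵀ` has nonnegative entries summing to `1`, and explicitly
`p₁(λ) = (21λ² + 6λ − 2)/25`, `p₂(λ) = 27(2λ² − 3λ + 1)/25`, `p₃(λ) = 3λ(1−λ)`. -/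
theorem convex_coordinates_nonneg
    (B : Matrix (Fin 3) (Fin 3) ℝ)
    (hB : B = !![1, 2/27, 0; 0, 0, 2/3; 0, 25/27, 1/3]) :
    ∀ lam : ℝ, (-3 + Real.sqrt 51) / 21 ≤ lam → lam ≤ 1 / 2 →
    ∀ p : Fin 3 → ℝ, p = B⁻¹ *ᵥ ![lam ^ 2, 2 * lam * (1 - lam), (1 - lam) ^ 2] →
      (∀ i, 0 ≤ p i) ∧ (∑ i, p i = 1) ∧
      p 0 = (21 * lam ^ 2 + 6 * lam - 2) / 25 ∧
      p 1 = 27 * (2 * lam ^ 2 - 3 * lam + 1) / 25 ∧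
      p 2 = 3 * lam * (1 - lam) := by
  intro lam h1 h2 p hp
  have hBinv : B⁻¹ = !![1, 1/25, -2/25; 0, -27/50, 27/25; 0, 3/2, 0] := by
    have : B * !![1, 1/25, -2/25; 0, -27/50, 27/25; 0, 3/2, 0] = 1 := by
      subst hB
      ext i j
      fin_cases i <;> fin_cases j <;>
        simp [Matrix.mul_apply, Fin.sum_univ_three, Matrix.vecHead, Matrix.vecTail] <;> norm_num
    exact inv_eq_right_inv this
  have hp0 : p 0 = (21 * lam ^ 2 + 6 * lam - 2) / 25 := by
    simp [hp, hBinv, Matrix.mulVec, dotProduct, Fin.sum_univ_three]; ring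
  have hp1 : p 1 = 27 * (2 * lam ^ 2 - 3 * lam + 1) / 25 := by
    simp [hp, hBinv, Matrix.mulVec, dotProduct, Fin.sum_univ_three]; ring
  have hp2 : p 2 = 3 * lam * (1 - lam) := by
    simp [hp, hBinv, Matrix.mulVec, dotProduct, Fin.sum_univ_three]; ring
  have hs : Real.sqrt 51 ^ 2 = 51 := Real.sq_sqrt (by norm_num)
  have hs0 : (0:ℝ) ≤ Real.sqrt 51 := Real.sqrt_nonneg 51
  have hlam0 : 0 ≤ lam := by nlinarith
  refine ⟨?_, ?_, hp0, hp1, hp2⟩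
  · intro i
    fin_cases i
    · show 0 ≤ p 0; rw [hp0]; nlinarith
    · show 0 ≤ p 1; rw [hp1]; nlinarith
    · show 0 ≤ p 2; rw [hp2]; nlinarith
  · rw [Fin.sum_univ_three, hp0, hp1, hp2]; ring

end
end
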